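/- arXiv:2211.16138 — 3 statements merged into one kernel-verified Lean document; each statement's English description precedes it below -/
import Mathlib

section
/- For real numbers ρ* and ρ with 0 ≤ ρ* ≤ ρ < 1, and real numbers b₂, z₁ with 0 ≤ b₂ and b₂ ≤ z₁, we have (b₂ - ρ z₁)/√(1 - ρ²) ≤ (b₂ - ρ* z₁)/√(1 - ρ*²). -/
/-- Key algebraic inequality: for `0 ≤ ρ* ≤ ρ < 1`, `0 ≤ b₂ ≤ z₁`,
`(b₂ - ρ z₁)/√(1 - ρ²) ≤ (b₂ - ρ* z₁)/√(1 - ρ*²)`. -/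
theorem key_inequality (ρstar ρ b₂ z₁ : ℝ)
    (h0 : 0 ≤ ρstar) (h1 : ρstar ≤ ρ) (h2 : ρ < 1)
    (hb : 0 ≤ b₂) (hz : b₂ ≤ z₁) :
    (b₂ - ρ * z₁) / Real.sqrt (1 - ρ ^ 2) ≤
      (b₂ - ρstar * z₁) / Real.sqrt (1 - ρstar ^ 2) := by
  have hs2 : ρstar < 1 := lt_of_le_of_lt h1 h2
  have hρ0 : 0 ≤ ρ := le_trans h0 h1
  have ha2 : (0:ℝ) < 1 - ρ ^ 2 := by nlinarith
  have hc2 : (0:ℝ) < 1 - ρstar ^ 2 := by nlinarith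
  set a := Real.sqrt (1 - ρ ^ 2) with hadef
  set c := Real.sqrt (1 - ρstar ^ 2) with hcdef
  have hap : 0 < a := Real.sqrt_pos.mpr ha2
  have hcp : 0 < c := Real.sqrt_pos.mpr hc2
  have hasq : a ^ 2 = 1 - ρ ^ 2 := Real.sq_sqrt ha2.le
  have hcsq : c ^ 2 = 1 - ρstar ^ 2 := Real.sq_sqrt hc2.le
  have hac : a ≤ c := Real.sqrt_le_sqrt (by nlinarith)
  rw [div_le_div_iff₀ hap hcp]
  have hz0 : 0 ≤ z₁ := le_trans hb hz
  rcases le_or_gt (b₂ - ρstar * z₁) 0 with hcase | hcase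
  · -- both numerators nonpositive
    have h3 : b₂ - ρ * z₁ ≤ b₂ - ρstar * z₁ := by nlinarith
    nlinarith [mul_le_mul_of_nonneg_left hac (neg_nonneg.mpr (h3.trans hcase))]
  · rcases le_or_gt (b₂ - ρ * z₁) 0 with hcase2 | hcase2
    · have : (b₂ - ρ * z₁) * c ≤ 0 := mul_nonpos_of_nonpos_of_nonneg hcase2 hcp.le
      nlinarith
    · -- both positive: square both sides
      have key : (b₂ - ρ * z₁) ^ 2 * c ^ 2 ≤ (b₂ - ρstar * z₁) ^ 2 * a ^ 2 := by
        rw [hasq, hcsq]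
        have hzb : 0 ≤ z₁ - ρ * b₂ := by nlinarith
        have hzb' : 0 ≤ z₁ - ρstar * b₂ := by nlinarith
        nlinarith [mul_nonneg (sub_nonneg.mpr h1)
            (add_nonneg (mul_nonneg hcase2.le hzb') (mul_nonneg hcase.le hzb))]
      nlinarith [mul_pos hcase2 hcp, mul_pos hcase hap,
        sq_nonneg ((b₂ - ρ * z₁) * c - (b₂ - ρstar * z₁) * a),
        sq_nonneg ((b₂ - ρ * z₁) * c + (b₂ - ρstar * z₁) * a)]
end

section
/- Let (Z₁, Z₂) be bivariate normal with standard normal margins and correlation ρ ∈ [0,1), and (Z₁*, Z₂*) bivariate normal with standard normal margins and correlation ρ* ∈ [0,1). If ρ* ≤ ρ and 0 ≤ b₂ ≤ b₁, then P(Z₁* > b₁ and Z₂* > b₂) ≤ P(Z₁ > b₁ and Z₂ > b₂). -/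
open MeasureTheory ProbabilityTheory

/-- `(Z₁, Z₂)` is bivariate normal with standard normal margins and correlation `ρ`:
every linear combination `a Z₁ + b Z₂` is Gaussian with mean `0` and
variance `a² + 2abρ + b²`. -/
def IsStdBivNormal {Ω : Type*} [MeasurableSpace Ω] (P : Measure Ω)
    (Z₁ Z₂ : Ω → ℝ) (ρ : ℝ) : Prop :=
  ∀ a b : ℝ, P.map (fun ω => a * Z₁ ω + b * Z₂ ω) =
    gaussianReal 0 (a ^ 2 + 2 * a * b * ρ + b ^ 2).toNNReal

/-! By Cramér–Wold (equality of characteristic functions), a pair with the projections required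
by `IsStdBivNormal` has the law of `(X, ρ X + √(1 - ρ²) Y)` with `X, Y` independent standard
normals. In this coupling the event is `X > b₁, Y > (b₂ - ρ X) / √(1 - ρ²)`, and when
`X > b₁ ≥ b₂ ≥ 0` the threshold on `Y` decreases as `ρ` increases, so the event grows with `ρ`. -/

theorem MeasureTheory.Measure.ext_of_map_linear_combinations {μ ν : Measure (ℝ × ℝ)}
    [IsFiniteMeasure μ] [IsFiniteMeasure ν]
    (h : ∀ a b : ℝ, μ.map (fun p => a * p.1 + b * p.2) = ν.map (fun p => a * p.1 + b * p.2)) :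
    μ = ν := by
  refine Measure.ext_of_charFunDual (funext fun L => ?_)
  have hL : ⇑L = fun p => L (1, 0) * p.1 + L (0, 1) * p.2 := by
    ext p
    conv_lhs => rw [show p = p.1 • ((1 : ℝ), (0 : ℝ)) + p.2 • ((0 : ℝ), (1 : ℝ)) by ext <;> simp]
    rw [map_add, map_smul, map_smul, smul_eq_mul, smul_eq_mul, mul_comm p.1, mul_comm p.2]
  rw [charFunDual_eq_charFun_map_one, charFunDual_eq_charFun_map_one, hL, h]

theorem gaussianReal_prod_map_linear_combination (c d : ℝ) :
    ((gaussianReal 0 1).prod (gaussianReal 0 1)).map (fun p => c * p.1 + d * p.2) =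
      gaussianReal 0 (c ^ 2 + d ^ 2).toNNReal := by
  have hmul (a : ℝ) : (gaussianReal 0 1).map (a * ·) = gaussianReal 0 (a ^ 2).toNNReal := by
    simpa [Real.toNNReal_of_nonneg (sq_nonneg a)] using
      gaussianReal_map_const_mul (μ := 0) (v := 1) a
  have h₁ : ((gaussianReal 0 1).prod (gaussianReal 0 1)).map (fun p => c * p.1) =
      gaussianReal 0 (c ^ 2).toNNReal := by
    change Measure.map ((c * ·) ∘ Prod.fst) _ = _
    rw [← Measure.map_map (measurable_const_mul c) measurable_fst, Measure.map_fst_prod,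
      measure_univ, one_smul, hmul]
  have h₂ : ((gaussianReal 0 1).prod (gaussianReal 0 1)).map (fun p => d * p.2) =
      gaussianReal 0 (d ^ 2).toNNReal := by
    change Measure.map ((d * ·) ∘ Prod.snd) _ = _
    rw [← Measure.map_map (measurable_const_mul d) measurable_snd, Measure.map_snd_prod,
      measure_univ, one_smul, hmul]
  have hind := indepFun_prod (μ := gaussianReal 0 1) (ν := gaussianReal 0 1)
    (measurable_const_mul c) (measurable_const_mul d)
  have hsum := gaussianReal_add_gaussianReal_of_indepFun hind h₁ h₂
  rw [zero_add, ← Real.toNNReal_add (sq_nonneg c) (sq_nonneg d)] at hsum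
  exact hsum

noncomputable def stdBivNormal (ρ : ℝ) : Measure (ℝ × ℝ) :=
  ((gaussianReal 0 1).prod (gaussianReal 0 1)).map fun p => (p.1, ρ * p.1 + √(1 - ρ ^ 2) * p.2)

theorem stdBivNormal_apply (ρ : ℝ) {s : Set (ℝ × ℝ)} (hs : MeasurableSet s) :
    stdBivNormal ρ s =
      (gaussianReal 0 1).prod (gaussianReal 0 1) {p | (p.1, ρ * p.1 + √(1 - ρ ^ 2) * p.2) ∈ s} :=
  Measure.map_apply (by fun_prop) hs

instance (ρ : ℝ) : IsProbabilityMeasure (stdBivNormal ρ) :=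
  Measure.isProbabilityMeasure_map (by fun_prop)

theorem stdBivNormal_map_linear_combination {ρ : ℝ} (hρ : |ρ| ≤ 1) (a b : ℝ) :
    (stdBivNormal ρ).map (fun p => a * p.1 + b * p.2) =
      gaussianReal 0 (a ^ 2 + 2 * a * b * ρ + b ^ 2).toNNReal := by
  have hσ : √(1 - ρ ^ 2) ^ 2 = 1 - ρ ^ 2 :=
    Real.sq_sqrt (by nlinarith [abs_le.mp hρ])
  rw [stdBivNormal, Measure.map_map (by fun_prop) (by fun_prop)]
  convert gaussianReal_prod_map_linear_combination (a + b * ρ) (b * √(1 - ρ ^ 2)) using 3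
  · simp only [Function.comp_apply]
    ring
  · linear_combination (-b ^ 2) * hσ

theorem IsStdBivNormal.aemeasurable_prodMk {Ω : Type*} [MeasurableSpace Ω] {P : Measure Ω}
    {Z₁ Z₂ : Ω → ℝ} {ρ : ℝ} (hZ : IsStdBivNormal P Z₁ Z₂ ρ) :
    AEMeasurable (fun ω => (Z₁ ω, Z₂ ω)) P := by
  have h₁ := hZ 1 0
  have h₂ := hZ 0 1
  simp only [one_mul, zero_mul, add_zero, zero_add] at h₁ h₂
  exact (AEMeasurable.of_map_ne_zero (h₁ ▸ IsProbabilityMeasure.ne_zero _)).prodMk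
    (AEMeasurable.of_map_ne_zero (h₂ ▸ IsProbabilityMeasure.ne_zero _))

theorem IsStdBivNormal.map_eq_stdBivNormal {Ω : Type*} [MeasurableSpace Ω] {P : Measure Ω}
    [IsFiniteMeasure P] {Z₁ Z₂ : Ω → ℝ} {ρ : ℝ} (hZ : IsStdBivNormal P Z₁ Z₂ ρ) (hρ : |ρ| ≤ 1) :
    P.map (fun ω => (Z₁ ω, Z₂ ω)) = stdBivNormal ρ := by
  refine Measure.ext_of_map_linear_combinations fun a b => ?_
  rw [AEMeasurable.map_map_of_aemeasurable (by fun_prop) hZ.aemeasurable_prodMk,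
    stdBivNormal_map_linear_combination hρ]
  exact hZ a b

theorem IsStdBivNormal.measure_preimage {Ω : Type*} [MeasurableSpace Ω] {P : Measure Ω}
    [IsFiniteMeasure P] {Z₁ Z₂ : Ω → ℝ} {ρ : ℝ} (hZ : IsStdBivNormal P Z₁ Z₂ ρ) (hρ : |ρ| ≤ 1)
    {s : Set (ℝ × ℝ)} (hs : MeasurableSet s) :
    P {ω | (Z₁ ω, Z₂ ω) ∈ s} = stdBivNormal ρ s := by
  rw [← hZ.map_eq_stdBivNormal hρ, Measure.map_apply_of_aemeasurable hZ.aemeasurable_prodMk hs]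
  rfl

theorem lt_mul_add_sqrt_one_sub_sq_mul_of_le {r r' b x w : ℝ} (hr' : 0 ≤ r') (hrr : r' ≤ r)
    (hr : r < 1) (hb : 0 ≤ b) (hbx : b ≤ x) (h : b < r' * x + √(1 - r' ^ 2) * w) :
    b < r * x + √(1 - r ^ 2) * w := by
  set s := √(1 - r ^ 2)
  set s' := √(1 - r' ^ 2)
  have hs2 : s ^ 2 = 1 - r ^ 2 := Real.sq_sqrt (by nlinarith)
  have hs'2 : s' ^ 2 = 1 - r' ^ 2 := Real.sq_sqrt (by nlinarith)
  have hs : 0 < s := Real.sqrt_pos.mpr (by nlinarith)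
  have hs' : 0 < s' := Real.sqrt_pos.mpr (by nlinarith)
  have hss' : s ≤ s' := Real.sqrt_le_sqrt (by nlinarith)
  -- `(1 + r) / (1 - r)` is increasing in `r`
  have hcross : s' * (1 - r) ≤ s * (1 - r') := by
    refine (pow_le_pow_iff_left₀ (by nlinarith) (by nlinarith) two_ne_zero).mp ?_
    rw [mul_pow, mul_pow, hs2, hs'2]
    nlinarith [mul_nonneg (mul_nonneg (sub_nonneg.mpr hr.le) (sub_nonneg.mpr (hrr.trans hr.le)))
      (sub_nonneg.mpr hrr)]
  have hthreshold : (b - r * x) * s' ≤ (b - r' * x) * s := by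
    nlinarith [mul_le_mul_of_nonneg_right hbx (sub_nonneg.mpr hss'), hb.trans hbx]
  have hw : (b - r' * x) * s < s' * w * s := mul_lt_mul_of_pos_right (by linarith) hs
  have hw' : (b - r * x) * s' < s * w * s' := by linarith
  linarith [lt_of_mul_lt_mul_right hw' hs'.le]

theorem stdBivNormal_upper_tail_mono {r r' b₁ b₂ : ℝ} (hr' : 0 ≤ r') (hrr : r' ≤ r) (hr : r < 1)
    (hb₂ : 0 ≤ b₂) (hb : b₂ ≤ b₁) :
    stdBivNormal r' {p | b₁ < p.1 ∧ b₂ < p.2} ≤ stdBivNormal r {p | b₁ < p.1 ∧ b₂ < p.2} := by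
  have hs : MeasurableSet {p : ℝ × ℝ | b₁ < p.1 ∧ b₂ < p.2} := by measurability
  rw [stdBivNormal_apply r' hs, stdBivNormal_apply r hs]
  refine measure_mono fun p ⟨hx, hw⟩ => ⟨hx, ?_⟩
  exact lt_mul_add_sqrt_one_sub_sq_mul_of_le hr' hrr hr hb₂ (hb.trans hx.le) hw

/-- Monotonicity of the bivariate normal joint upper tail in the correlation:
if `ρ* ≤ ρ` and `0 ≤ b₂ ≤ b₁` then
`P(Z₁* > b₁, Z₂* > b₂) ≤ P(Z₁ > b₁, Z₂ > b₂)`. -/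
theorem bivNormal_upper_tail_mono
    {Ω Ω' : Type*} [MeasurableSpace Ω] [MeasurableSpace Ω']
    (P : Measure Ω) (P' : Measure Ω')
    [IsProbabilityMeasure P] [IsProbabilityMeasure P']
    (Z₁ Z₂ : Ω → ℝ) (Zs₁ Zs₂ : Ω' → ℝ) (ρ ρstar : ℝ)
    (hZ : IsStdBivNormal P Z₁ Z₂ ρ) (hZs : IsStdBivNormal P' Zs₁ Zs₂ ρstar)
    (hρ0 : 0 ≤ ρ) (hρ1 : ρ < 1) (hρs0 : 0 ≤ ρstar) (hρs1 : ρstar < 1)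
    (hρρ : ρstar ≤ ρ) (b₁ b₂ : ℝ) (hb₂ : 0 ≤ b₂) (hb : b₂ ≤ b₁) :
    P' {ω | b₁ < Zs₁ ω ∧ b₂ < Zs₂ ω} ≤ P {ω | b₁ < Z₁ ω ∧ b₂ < Z₂ ω} := by
  have hs : MeasurableSet {p : ℝ × ℝ | b₁ < p.1 ∧ b₂ < p.2} := by measurability
  calc P' {ω | b₁ < Zs₁ ω ∧ b₂ < Zs₂ ω}
      = stdBivNormal ρstar {p | b₁ < p.1 ∧ b₂ < p.2} :=
        hZs.measure_preimage (abs_le.mpr ⟨by linarith [hρs0], hρs1.le⟩) hs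
    _ ≤ stdBivNormal ρ {p | b₁ < p.1 ∧ b₂ < p.2} :=
        stdBivNormal_upper_tail_mono hρs0 hρρ hρ1 hb₂ hb
    _ = P {ω | b₁ < Z₁ ω ∧ b₂ < Z₂ ω} :=
        (hZ.measure_preimage (abs_le.mpr ⟨by linarith [hρ0], hρ1.le⟩) hs).symm
end

section
/- For ρ ∈ [0,1), the function ρ ↦ P(Z₁ > b₁, Z₂ > b₂), where (Z₁,Z₂) is bivariate standard normal with correlation ρ and 0 ≤ b₂ ≤ b₁, is monotone nondecreasing in ρ. -/
/-!
A standard bivariate normal pair with correlation `ρ ∈ [0, 1)` has the law of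
`(X, ρ X + √(1 - ρ²) Y)` with `X, Y` independent standard normals, since by the Cramér–Wold
device the joint law is determined by the laws of all linear combinations. The orthant
event then reads `X > b₁, √(1 - ρ²) Y > b₂ - ρ X`, and for `X ≥ b₁ ≥ b₂ ≥ 0` the threshold
`(b₂ - ρ X) / √(1 - ρ²)` decreases in `ρ`, so the event for `ρ` is contained in the event for
`ρ' ≥ ρ`.
-/

open MeasureTheory ProbabilityTheory

open scoped NNReal

theorem MeasureTheory.Measure.ext_of_forall_map_strongDual {E : Type*} [NormedAddCommGroup E]
    [NormedSpace ℝ E] [CompleteSpace E] [MeasurableSpace E] [BorelSpace E]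
    [SecondCountableTopology E] {μ ν : Measure E} [IsFiniteMeasure μ] [IsFiniteMeasure ν]
    (h : ∀ L : StrongDual ℝ E, μ.map L = ν.map L) : μ = ν :=
  ext_of_charFunDual <| funext fun L => by
    rw [charFunDual_eq_charFun_map_one, charFunDual_eq_charFun_map_one, h]

theorem StrongDual.apply_prod_eq (L : StrongDual ℝ (ℝ × ℝ)) (p : ℝ × ℝ) :
    L p = L (1, 0) * p.1 + L (0, 1) * p.2 := by
  have : p = p.1 • ((1 : ℝ), (0 : ℝ)) + p.2 • ((0 : ℝ), (1 : ℝ)) := by ext <;> simp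
  conv_lhs => rw [this, map_add, map_smul, map_smul]
  simp only [smul_eq_mul, mul_comm]

theorem gaussianReal_prod_map_linear (c d : ℝ) (v w : ℝ≥0) :
    ((gaussianReal 0 v).prod (gaussianReal 0 w)).map (fun p => c * p.1 + d * p.2) =
      gaussianReal 0 (.mk (c ^ 2) (sq_nonneg c) * v + .mk (d ^ 2) (sq_nonneg d) * w) := by
  have hcomp : (fun p : ℝ × ℝ => c * p.1 + d * p.2) =
      (fun q : ℝ × ℝ => q.1 + q.2) ∘ Prod.map (c * ·) (d * ·) := rfl
  rw [hcomp, ← Measure.map_map (by fun_prop) (by fun_prop), ← Measure.map_prod_map _ _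
    (by fun_prop) (by fun_prop), gaussianReal_map_const_mul, gaussianReal_map_const_mul]
  simp only [mul_zero]
  exact gaussianReal_conv_gaussianReal.trans (by rw [add_zero])

namespace IsStdBivNormal

variable {Ω : Type*} [MeasurableSpace Ω] {P : Measure Ω} {Z₁ Z₂ : Ω → ℝ} {ρ : ℝ}

theorem aemeasurable_pair (hZ : IsStdBivNormal P Z₁ Z₂ ρ) :
    AEMeasurable (fun ω => (Z₁ ω, Z₂ ω)) P := by
  have h (a b : ℝ) : AEMeasurable (fun ω => a * Z₁ ω + b * Z₂ ω) P :=
    AEMeasurable.of_map_ne_zero (by simp [hZ a b, NeZero.ne])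
  exact (by simpa using h 1 0 : AEMeasurable Z₁ P).prodMk (by simpa using h 0 1)

theorem map_pair_eq {Ω' : Type*} [MeasurableSpace Ω'] {P' : Measure Ω'} {Z₁' Z₂' : Ω' → ℝ}
    [IsFiniteMeasure P] [IsFiniteMeasure P']
    (hZ : IsStdBivNormal P Z₁ Z₂ ρ) (hZ' : IsStdBivNormal P' Z₁' Z₂' ρ) :
    P.map (fun ω => (Z₁ ω, Z₂ ω)) = P'.map (fun ω => (Z₁' ω, Z₂' ω)) := by
  refine Measure.ext_of_forall_map_strongDual fun L => ?_
  rw [AEMeasurable.map_map_of_aemeasurable L.continuous.aemeasurable hZ.aemeasurable_pair,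
    AEMeasurable.map_map_of_aemeasurable L.continuous.aemeasurable hZ'.aemeasurable_pair]
  have hL : ⇑L = fun p => L (1, 0) * p.1 + L (0, 1) * p.2 := funext L.apply_prod_eq
  rw [hL]
  exact (hZ _ _).trans (hZ' _ _).symm

theorem measure_preimage_eq {Ω' : Type*} [MeasurableSpace Ω'] {P' : Measure Ω'}
    {Z₁' Z₂' : Ω' → ℝ} [IsFiniteMeasure P] [IsFiniteMeasure P']
    (hZ : IsStdBivNormal P Z₁ Z₂ ρ) (hZ' : IsStdBivNormal P' Z₁' Z₂' ρ) {S : Set (ℝ × ℝ)}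
    (hS : MeasurableSet S) :
    P ((fun ω => (Z₁ ω, Z₂ ω)) ⁻¹' S) = P' ((fun ω => (Z₁' ω, Z₂' ω)) ⁻¹' S) := by
  rw [← Measure.map_apply_of_aemeasurable hZ.aemeasurable_pair hS,
    ← Measure.map_apply_of_aemeasurable hZ'.aemeasurable_pair hS, hZ.map_pair_eq hZ']

end IsStdBivNormal

theorem isStdBivNormal_gaussianReal_prod {ρ : ℝ} (hρ : ρ ^ 2 ≤ 1) :
    IsStdBivNormal ((gaussianReal 0 1).prod (gaussianReal 0 1)) Prod.fst
      (fun p => ρ * p.1 + √(1 - ρ ^ 2) * p.2) ρ := by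
  intro a b
  have hs : √(1 - ρ ^ 2) ^ 2 = 1 - ρ ^ 2 := Real.sq_sqrt (by linarith)
  have hcomb : (fun p : ℝ × ℝ => a * p.1 + b * (ρ * p.1 + √(1 - ρ ^ 2) * p.2)) =
      fun p => (a + b * ρ) * p.1 + b * √(1 - ρ ^ 2) * p.2 := by
    ext p; ring
  rw [hcomb, gaussianReal_prod_map_linear]
  congr 1
  ext
  simp only [mul_one, NNReal.coe_add, NNReal.coe_mk]
  rw [Real.coe_toNNReal _ (by nlinarith [sq_nonneg (a + b * ρ)])]
  rw [mul_pow, hs]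
  ring

theorem sqrt_one_sub_sq_mul_sub_le {ρ ρ' b x : ℝ} (hρ : 0 ≤ ρ) (hρρ' : ρ ≤ ρ') (hρ' : ρ' < 1)
    (hb : 0 ≤ b) (hbx : b ≤ x) :
    √(1 - ρ ^ 2) * (b - ρ' * x) ≤ √(1 - ρ' ^ 2) * (b - ρ * x) := by
  set s := √(1 - ρ ^ 2)
  set s' := √(1 - ρ' ^ 2)
  have hs : s ^ 2 = 1 - ρ ^ 2 := Real.sq_sqrt (by nlinarith)
  have hs' : s' ^ 2 = 1 - ρ' ^ 2 := Real.sq_sqrt (by nlinarith)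
  have hs'_le : s' ≤ s := Real.sqrt_le_sqrt (by nlinarith)
  have hs'_nonneg : 0 ≤ s' := Real.sqrt_nonneg _
  -- squaring reduces this to `(1 - ρ)(1 - ρ')(ρ' - ρ) ≥ 0`
  have key : s * (1 - ρ') ≤ s' * (1 - ρ) := by
    refine (sq_le_sq₀ (by nlinarith) (by nlinarith)).mp ?_
    rw [mul_pow, mul_pow, hs, hs']
    nlinarith [mul_nonneg (mul_nonneg (sub_nonneg.mpr (hρρ'.trans hρ'.le)) (sub_nonneg.mpr hρ'.le))
      (sub_nonneg.mpr hρρ')]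
  -- `b (s - s') ≤ x (s - s') ≤ x (ρ' s - ρ s')`, the second step being `key`
  nlinarith [mul_le_mul_of_nonneg_right hbx (sub_nonneg.mpr hs'_le)]

theorem lt_mul_add_sqrt_one_sub_sq_mul_of_le_s14 {ρ ρ' b x y : ℝ} (hρ : 0 ≤ ρ) (hρρ' : ρ ≤ ρ')
    (hρ' : ρ' < 1) (hb : 0 ≤ b) (hbx : b ≤ x) (h : b < ρ * x + √(1 - ρ ^ 2) * y) :
    b < ρ' * x + √(1 - ρ' ^ 2) * y := by
  have hs : 0 < √(1 - ρ ^ 2) := Real.sqrt_pos.mpr (by nlinarith)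
  have hs' : 0 < √(1 - ρ' ^ 2) := Real.sqrt_pos.mpr (by nlinarith)
  have := sqrt_one_sub_sq_mul_sub_le hρ hρρ' hρ' hb hbx
  nlinarith [mul_lt_mul_of_pos_left h hs']

theorem orthant_prob_mono_in_correlation_general
    {Ω Ω' : Type*} [MeasurableSpace Ω] [MeasurableSpace Ω']
    (P : Measure Ω) (P' : Measure Ω')
    [IsProbabilityMeasure P] [IsProbabilityMeasure P']
    (Z₁ Z₂ : Ω → ℝ) (Z₁' Z₂' : Ω' → ℝ) (ρ ρ' : ℝ)
    (hZ : IsStdBivNormal P Z₁ Z₂ ρ) (hZ' : IsStdBivNormal P' Z₁' Z₂' ρ')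
    (hρ0 : 0 ≤ ρ) (hρ'1 : ρ' < 1)
    (hmono : ρ ≤ ρ') (b₁ b₂ : ℝ) (hb₂ : 0 ≤ b₂) (hb : b₂ ≤ b₁) :
    P {ω | b₁ < Z₁ ω ∧ b₂ < Z₂ ω} ≤ P' {ω | b₁ < Z₁' ω ∧ b₂ < Z₂' ω} := by
  have hS : MeasurableSet {p : ℝ × ℝ | b₁ < p.1 ∧ b₂ < p.2} :=
    (measurableSet_lt measurable_const measurable_fst).inter
      (measurableSet_lt measurable_const measurable_snd)
  have hmodel := isStdBivNormal_gaussianReal_prod (ρ := ρ) (by nlinarith)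
  have hmodel' := isStdBivNormal_gaussianReal_prod (ρ := ρ') (by nlinarith)
  calc P {ω | b₁ < Z₁ ω ∧ b₂ < Z₂ ω}
      = (gaussianReal 0 1).prod (gaussianReal 0 1)
          {p | b₁ < p.1 ∧ b₂ < ρ * p.1 + √(1 - ρ ^ 2) * p.2} := hZ.measure_preimage_eq hmodel hS
    _ ≤ (gaussianReal 0 1).prod (gaussianReal 0 1)
          {p | b₁ < p.1 ∧ b₂ < ρ' * p.1 + √(1 - ρ' ^ 2) * p.2} :=
        measure_mono fun p ⟨h₁, h₂⟩ => ⟨h₁,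
          lt_mul_add_sqrt_one_sub_sq_mul_of_le_s14 hρ0 hmono hρ'1 hb₂ (hb.trans h₁.le) h₂⟩
    _ = P' {ω | b₁ < Z₁' ω ∧ b₂ < Z₂' ω} := (hZ'.measure_preimage_eq hmodel' hS).symm

/-- The bivariate normal upper orthant probability `P(Z₁ > b₁, Z₂ > b₂)` with
`0 ≤ b₂ ≤ b₁` is monotone nondecreasing in the correlation `ρ ∈ [0,1)`. -/
theorem orthant_prob_mono_in_correlation
    {Ω Ω' : Type*} [MeasurableSpace Ω] [MeasurableSpace Ω']
    (P : Measure Ω) (P' : Measure Ω')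
    [IsProbabilityMeasure P] [IsProbabilityMeasure P']
    (Z₁ Z₂ : Ω → ℝ) (Z₁' Z₂' : Ω' → ℝ) (ρ ρ' : ℝ)
    (hZ : IsStdBivNormal P Z₁ Z₂ ρ) (hZ' : IsStdBivNormal P' Z₁' Z₂' ρ')
    (hρ0 : 0 ≤ ρ) (hρ1 : ρ < 1) (hρ'0 : 0 ≤ ρ') (hρ'1 : ρ' < 1)
    (hmono : ρ ≤ ρ') (b₁ b₂ : ℝ) (hb₂ : 0 ≤ b₂) (hb : b₂ ≤ b₁) :
    P {ω | b₁ < Z₁ ω ∧ b₂ < Z₂ ω} ≤ P' {ω | b₁ < Z₁' ω ∧ b₂ < Z₂' ω} :=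
  orthant_prob_mono_in_correlation_general P P' Z₁ Z₂ Z₁' Z₂' ρ ρ' hZ hZ' hρ0 hρ'1 hmono b₁ b₂ hb₂
    hb
end
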